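/- arXiv:1405.7504 — 2 statements merged into one kernel-verified Lean document; each statement's English description precedes it below -/
import Mathlib

section
/- Let l ≥ 1 and let n : Fin l → ℕ be positive with n_i ≠ n_j whenever i ≠ j, and set A = ∏_{i<l} Ł_{n_i} (componentwise operations). Then every proper subalgebra S of A embeds into a product ∏_{i<l} Ł_{d_i} where each d_i divides n_i and d_j ≠ n_j for at least one j: there exist d : Fin l → ℕ positive with d_i ∣ n_i for all i, d_j ≠ n_j for some j, and an injective homomorphism from S (with the operations induced from A) into ∏_{i<l} Ł_{d_i}. -/
/-- The carrier of the Łukasiewicz chain Łₙ : {k/n : k ∈ ℕ, 0 ≤ k ≤ n} ⊆ ℚ. -/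
abbrev Luk (n : ℕ+) : Type := {x : ℚ // ∃ k : ℕ, k ≤ (n : ℕ) ∧ x = (k : ℚ) / (n : ℕ)}

/-- The constant 0 of Łₙ. -/
def lukZero (n : ℕ+) : Luk n := ⟨0, 0, Nat.zero_le _, by simp⟩

/-- The negation ¬x = 1 - x of Łₙ. -/
def lukNeg {n : ℕ+} (x : Luk n) : Luk n :=
  ⟨1 - x.1, by
    obtain ⟨k, hk, hx⟩ := x.2
    refine ⟨(n : ℕ) - k, Nat.sub_le _ _, ?_⟩
    have hn : ((n : ℕ) : ℚ) ≠ 0 := by exact_mod_cast n.pos.ne'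
    rw [hx, Nat.cast_sub hk, sub_div, div_self hn]⟩

/-- The truncated sum x ⊕ y = min 1 (x + y) of Łₙ. -/
def lukOplus {n : ℕ+} (x y : Luk n) : Luk n :=
  ⟨min 1 (x.1 + y.1), by
    obtain ⟨k, hk, hx⟩ := x.2
    obtain ⟨j, hj, hy⟩ := y.2
    refine ⟨min (n : ℕ) (k + j), min_le_left _ _, ?_⟩
    have hn : (0 : ℚ) < ((n : ℕ) : ℚ) := by exact_mod_cast n.pos
    rw [hx, hy, ← add_div]
    rcases le_total (k + j) (n : ℕ) with h | h
    · rw [min_eq_right h, min_eq_right]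
      · push_cast; ring_nf
      · rw [div_le_one hn]; exact_mod_cast h
    · rw [min_eq_left h, min_eq_left, div_self hn.ne']
      · rw [one_le_div hn]; exact_mod_cast h⟩

/-
The image of `S` in each coordinate is a subalgebra of `Ł_(n i)`, and the subalgebras of `Łₙ`
are exactly the chains `Ł_d` with `d ∣ n`: their numerators are the multiples of the least
positive one. So `S` already lives in `∏ Ł_(d i)`, and it remains to see that some `d i ≠ n i`,
i.e. that a subalgebra projecting onto every factor is everything. If `n i < n j`, an element of
`S` with value `1/n_j` at `j` separates `i` from `j` by its zero pattern (possibly after taking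
`¬((n_j - 1)·s)`); saturating multiples make such separators Boolean, their `⊙`-products are the
atoms `e i`, and every `x` is `⊕ᵢ (sᵢ ⊙ eᵢ)` for any `sᵢ ∈ S` agreeing with `x` at `i`.
-/

namespace Luk

variable {n : ℕ+}

theorem nonneg (x : Luk n) : 0 ≤ x.1 := by
  obtain ⟨k, -, hx⟩ := x.2
  rw [hx]; positivity

theorem le_one (x : Luk n) : x.1 ≤ 1 := by
  obtain ⟨k, hk, hx⟩ := x.2
  rw [hx, div_le_one (by positivity)]; exact_mod_cast hk

theorem one_le_mul_of_ne_zero {x : Luk n} (hx : x.1 ≠ 0) {m : ℕ} (hm : (n : ℕ) ≤ m) :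
    1 ≤ m * x.1 := by
  obtain ⟨k, -, hxk⟩ := x.2
  have hk : 1 ≤ k := Nat.one_le_iff_ne_zero.2 (by rintro rfl; simp [hxk] at hx)
  rw [hxk, mul_div_assoc', one_le_div (by positivity)]
  exact_mod_cast hm.trans (Nat.le_mul_of_pos_right m hk)

end Luk

def lukNsmul {n : ℕ+} : ℕ → Luk n → Luk n
  | 0, _ => lukZero n
  | m + 1, x => lukOplus x (lukNsmul m x)

def lukOdot {n : ℕ+} (x y : Luk n) : Luk n := lukNeg (lukOplus (lukNeg x) (lukNeg y))

section Values

variable {n : ℕ+}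

@[simp] theorem lukZero_val : (lukZero n).1 = 0 := rfl

@[simp] theorem lukNeg_val (x : Luk n) : (lukNeg x).1 = 1 - x.1 := rfl

@[simp] theorem lukOplus_val (x y : Luk n) : (lukOplus x y).1 = min 1 (x.1 + y.1) := rfl

theorem lukNsmul_val (m : ℕ) (x : Luk n) : (lukNsmul m x).1 = min 1 (m * x.1) := by
  induction m with
  | zero => simp [lukNsmul]
  | succ m ih =>
    simp only [lukNsmul, lukOplus_val, ih, Nat.cast_succ]
    have := x.nonneg
    rcases le_total 1 (m * x.1) with h | h
    · rw [min_eq_left h, min_eq_left (by linarith), min_eq_left (by linarith)]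
    · rw [min_eq_right h]; ring_nf

theorem lukNsmul_val_of_ne_zero {x : Luk n} (hx : x.1 ≠ 0) {m : ℕ} (hm : (n : ℕ) ≤ m) :
    (lukNsmul m x).1 = 1 := by
  rw [lukNsmul_val, min_eq_left (x.one_le_mul_of_ne_zero hx hm)]

theorem lukOdot_val (x y : Luk n) : (lukOdot x y).1 = max 0 (x.1 + y.1 - 1) := by
  simp only [lukOdot, lukNeg_val, lukOplus_val, ← max_sub_sub_left]
  ring_nf

theorem lukOdot_val_of_right_eq_one (x : Luk n) {y : Luk n} (hy : y.1 = 1) :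
    (lukOdot x y).1 = x.1 := by
  simp [lukOdot_val, hy, x.nonneg]

theorem lukOdot_val_of_left_eq_zero {x : Luk n} (hx : x.1 = 0) (y : Luk n) :
    (lukOdot x y).1 = 0 := by
  simp [lukOdot_val, hx, y.le_one]

theorem lukOdot_val_of_right_eq_zero (x : Luk n) {y : Luk n} (hy : y.1 = 0) :
    (lukOdot x y).1 = 0 := by
  simp [lukOdot_val, hy, x.le_one]

end Values

theorem exists_dvd_forall_mem_iff_dvd {K : Set ℕ} {n : ℕ} (hn : 0 < n) (h0 : 0 ∈ K)
    (hle : ∀ a ∈ K, a ≤ n) (hadd : ∀ a ∈ K, ∀ b ∈ K, min n (a + b) ∈ K)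
    (hneg : ∀ a ∈ K, n - a ∈ K) :
    ∃ g, g ∣ n ∧ ∀ k ≤ n, k ∈ K ↔ g ∣ k := by
  classical
  have hsub : ∀ a ∈ K, ∀ b ∈ K, a - b ∈ K := fun a ha b hb => by
    have := hneg _ (hadd _ (hneg a ha) b hb)
    rwa [show n - min n (n - a + b) = a - b by have := hle a ha; omega] at this
  have hnK : n ∈ K := by simpa using hneg 0 h0
  have hpos : ∃ g, 0 < g ∧ g ∈ K := ⟨n, hn, hnK⟩
  obtain ⟨hgpos, hgK⟩ := Nat.find_spec hpos
  set g := Nat.find hpos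
  have hmul : ∀ m, g * m ≤ n → g * m ∈ K := by
    intro m
    induction m with
    | zero => simpa using h0
    | succ m ih =>
      intro h
      have := hadd _ (ih (by nlinarith)) _ hgK
      rwa [min_eq_right (by linarith [Nat.mul_succ g m]), ← Nat.mul_succ] at this
  have hdvd : ∀ k ∈ K, g ∣ k := by
    intro k hk
    have hmod : k % g ∈ K := by
      rw [Nat.mod_eq_sub_mul_div]
      exact hsub _ hk _ (hmul _ ((Nat.mul_div_le k g).trans (hle k hk)))
    by_contra h
    exact Nat.find_min hpos (Nat.mod_lt k hgpos)
      ⟨Nat.pos_of_ne_zero (mt Nat.dvd_of_mod_eq_zero h), hmod⟩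
  exact ⟨g, hdvd n hnK, fun k hk => ⟨hdvd k, fun ⟨m, hm⟩ => hm ▸ hmul m (hm ▸ hk)⟩⟩

theorem exists_le_div_eq_div_iff_dvd {n g d k : ℕ} (hnd : n = g * d) (hn : 0 < n) (hk : k ≤ n) :
    (∃ m ≤ d, (k : ℚ) / n = m / d) ↔ g ∣ k := by
  have hg : 0 < g := Nat.pos_of_mul_pos_right (hnd ▸ hn)
  have hd : 0 < d := Nat.pos_of_mul_pos_left (hnd ▸ hn)
  subst hnd
  constructor
  · rintro ⟨m, -, hkm⟩
    rw [div_eq_div_iff (by positivity) (by positivity)] at hkm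
    have : k * d = g * m * d := by rw [show g * m * d = m * (g * d) by ring]; exact_mod_cast hkm
    exact ⟨m, Nat.eq_of_mul_eq_mul_right hd this⟩
  · rintro ⟨m, rfl⟩
    refine ⟨m, Nat.le_of_mul_le_mul_left hk hg, ?_⟩
    push_cast
    exact mul_div_mul_left _ _ (by positivity)

theorem Luk.exists_dvd_forall_mem_iff {n : ℕ+} {T : Set (Luk n)} (h0 : lukZero n ∈ T)
    (hop : ∀ x ∈ T, ∀ y ∈ T, lukOplus x y ∈ T) (hneg : ∀ x ∈ T, lukNeg x ∈ T) :
    ∃ d : ℕ+, (d : ℕ) ∣ n ∧ ∀ x : Luk n, x ∈ T ↔ ∃ k ≤ (d : ℕ), x.1 = k / d := by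
  have hn : (0 : ℚ) < (n : ℕ) := by positivity
  set K : Set ℕ := {k | ∃ x ∈ T, x.1 = k / n}
  have hle : ∀ a ∈ K, a ≤ (n : ℕ) := by
    rintro a ⟨x, -, hx⟩
    have := x.le_one
    rwa [hx, div_le_one hn, Nat.cast_le] at this
  have hadd : ∀ a ∈ K, ∀ b ∈ K, min (n : ℕ) (a + b) ∈ K := by
    rintro a ⟨x, hxT, hx⟩ b ⟨y, hyT, hy⟩
    refine ⟨_, hop x hxT y hyT, ?_⟩
    rw [lukOplus_val, hx, hy, ← div_self hn.ne', ← add_div, min_div_div_right hn.le]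
    norm_cast
  have hsub : ∀ a ∈ K, (n : ℕ) - a ∈ K := by
    rintro a ha
    obtain ⟨x, hxT, hx⟩ := id ha
    refine ⟨_, hneg x hxT, ?_⟩
    rw [lukNeg_val, hx, Nat.cast_sub (hle a ha), sub_div, div_self hn.ne']
  have h0K : 0 ∈ K := ⟨_, h0, by simp⟩
  obtain ⟨g, ⟨d, hnd⟩, hK⟩ := exists_dvd_forall_mem_iff_dvd n.pos h0K hle hadd hsub
  have hd : 0 < d := Nat.pos_of_mul_pos_left (hnd ▸ n.pos)
  refine ⟨⟨d, hd⟩, Dvd.intro_left g hnd.symm, fun x => ?_⟩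
  obtain ⟨k, hk, hxk⟩ := x.2
  have hxK : x ∈ T ↔ k ∈ K :=
    ⟨fun hx => ⟨x, hx, hxk⟩, fun ⟨y, hy, hyk⟩ => Subtype.ext (hyk.trans hxk.symm) ▸ hy⟩
  rw [hxK, hK k hk, hxk, ← exists_le_div_eq_div_iff_dvd hnd n.pos hk]
  rfl

structure IsLukSubalgebra {ι : Type*} {n : ι → ℕ+} (S : Set (∀ i, Luk (n i))) : Prop where
  zero_mem : (fun i => lukZero (n i)) ∈ S
  oplus_mem : ∀ x ∈ S, ∀ y ∈ S, (fun i => lukOplus (x i) (y i)) ∈ S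
  neg_mem : ∀ x ∈ S, (fun i => lukNeg (x i)) ∈ S

namespace IsLukSubalgebra

variable {ι : Type*} {n : ι → ℕ+} {S : Set (∀ i, Luk (n i))}

theorem one_mem (hS : IsLukSubalgebra S) : (fun i => lukNeg (lukZero (n i))) ∈ S :=
  hS.neg_mem _ hS.zero_mem

theorem nsmul_mem (hS : IsLukSubalgebra S) (m : ℕ) {x : ∀ i, Luk (n i)} (hx : x ∈ S) :
    (fun i => lukNsmul m (x i)) ∈ S := by
  induction m with
  | zero => exact hS.zero_mem
  | succ m ih => exact hS.oplus_mem x hx _ ih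

theorem odot_mem (hS : IsLukSubalgebra S) {x y : ∀ i, Luk (n i)} (hx : x ∈ S) (hy : y ∈ S) :
    (fun i => lukOdot (x i) (y i)) ∈ S :=
  hS.neg_mem _ (hS.oplus_mem _ (hS.neg_mem x hx) _ (hS.neg_mem y hy))

theorem exists_dvd_forall_mem_image_eval_iff (hS : IsLukSubalgebra S) (i : ι) :
    ∃ d : ℕ+, (d : ℕ) ∣ n i ∧
      ∀ x : Luk (n i), x ∈ Function.eval i '' S ↔ ∃ k ≤ (d : ℕ), x.1 = k / d :=
  Luk.exists_dvd_forall_mem_iff ⟨_, hS.zero_mem, rfl⟩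
    (by rintro _ ⟨x, hx, rfl⟩ _ ⟨y, hy, rfl⟩; exact ⟨_, hS.oplus_mem x hx y hy, rfl⟩)
    (by rintro _ ⟨x, hx, rfl⟩; exact ⟨_, hS.neg_mem x hx, rfl⟩)

theorem exists_eq_zero_ne_zero_of_lt (hS : IsLukSubalgebra S)
    (hsurj : ∀ i (x : Luk (n i)), ∃ s ∈ S, s i = x) {i j : ι} (hij : n i < n j) :
    ∃ s ∈ S, (s i).1 = 0 ∧ (s j).1 ≠ 0 := by
  have hnj : (0 : ℚ) < (n j : ℕ) := by positivity
  obtain ⟨s, hs, hsj⟩ := hsurj j ⟨1 / (n j : ℕ), 1, (n j).pos, by simp⟩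
  by_cases hsi : (s i).1 = 0
  · refine ⟨s, hs, hsi, ?_⟩
    rw [hsj]; positivity
  -- `(n j - 1) • s` saturates at `i` but not at `j`, where `s` takes its least nonzero value
  have hm : (n i : ℕ) ≤ (n j : ℕ) - 1 := Nat.le_sub_one_of_lt (PNat.coe_lt_coe _ _ |>.2 hij)
  refine ⟨_, hS.neg_mem _ (hS.nsmul_mem ((n j : ℕ) - 1) hs), ?_, ?_⟩
  · rw [lukNeg_val, lukNsmul_val_of_ne_zero hsi hm, sub_self]
  · rw [lukNeg_val, lukNsmul_val, hsj, Nat.cast_pred (n j).pos, min_eq_right]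
    · field_simp; simp
    · rw [← mul_div_assoc, mul_one, div_le_one hnj]; linarith

theorem exists_eq_one_eq_zero (hS : IsLukSubalgebra S)
    (hsurj : ∀ i (x : Luk (n i)), ∃ s ∈ S, s i = x) (hn : Function.Injective n) {i j : ι}
    (hij : i ≠ j) : ∃ c ∈ S, (c i).1 = 1 ∧ (c j).1 = 0 := by
  rcases lt_or_gt_of_ne (hn.ne hij) with hlt | hlt
  · obtain ⟨s, hs, hsi, hsj⟩ := hS.exists_eq_zero_ne_zero_of_lt hsurj hlt
    refine ⟨_, hS.neg_mem _ (hS.nsmul_mem (n j) hs), ?_, ?_⟩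
    · simp [lukNsmul_val, hsi]
    · rw [lukNeg_val, lukNsmul_val_of_ne_zero hsj le_rfl, sub_self]
  · obtain ⟨s, hs, hsj, hsi⟩ := hS.exists_eq_zero_ne_zero_of_lt hsurj hlt
    exact ⟨_, hS.nsmul_mem (n i) hs, lukNsmul_val_of_ne_zero hsi le_rfl, by simp [lukNsmul_val, hsj]⟩

theorem exists_atom (hS : IsLukSubalgebra S) {i : ι}
    (hsep : ∀ j, j ≠ i → ∃ c ∈ S, (c i).1 = 1 ∧ (c j).1 = 0) (T : Finset ι) :
    ∃ e ∈ S, (e i).1 = 1 ∧ ∀ j ∈ T, j ≠ i → (e j).1 = 0 := by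
  classical
  induction T using Finset.induction with
  | empty => exact ⟨_, hS.one_mem, by simp, by simp⟩
  | insert a T _ ih =>
    obtain ⟨e, he, hei, hej⟩ := ih
    by_cases hai : a = i
    · subst hai
      exact ⟨e, he, hei, fun j hj hji => hej j ((Finset.mem_insert.1 hj).resolve_left hji) hji⟩
    obtain ⟨c, hc, hci, hca⟩ := hsep a hai
    refine ⟨_, hS.odot_mem he hc, (lukOdot_val_of_right_eq_one _ hci).trans hei, fun j hj hji => ?_⟩
    rcases Finset.mem_insert.1 hj with rfl | hjT
    · exact lukOdot_val_of_right_eq_zero _ hca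
    · exact lukOdot_val_of_left_eq_zero (hej j hjT hji) _

theorem exists_eq_on_eq_zero_off (hS : IsLukSubalgebra S)
    (hsurj : ∀ i (x : Luk (n i)), ∃ s ∈ S, s i = x)
    (hatom : ∀ i, ∃ e ∈ S, (e i).1 = 1 ∧ ∀ j, j ≠ i → (e j).1 = 0)
    (x : ∀ i, Luk (n i)) (T : Finset ι) :
    ∃ y ∈ S, (∀ j ∈ T, (y j).1 = (x j).1) ∧ ∀ j ∉ T, (y j).1 = 0 := by
  classical
  induction T using Finset.induction with
  | empty => exact ⟨_, hS.zero_mem, by simp, fun _ _ => rfl⟩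
  | insert a T haT ih =>
    obtain ⟨y, hy, hyT, hy0⟩ := ih
    obtain ⟨s, hs, hsx⟩ := hsurj a (x a)
    obtain ⟨e, he, hea, hej⟩ := hatom a
    have hya : (y a).1 = 0 := hy0 a haT
    have hnew (j : ι) (hja : j ≠ a) :
        (lukOplus (y j) (lukOdot (s j) (e j))).1 = (y j).1 := by
      rw [lukOplus_val, lukOdot_val_of_right_eq_zero _ (hej j hja), add_zero,
        min_eq_right (y j).le_one]
    refine ⟨_, hS.oplus_mem y hy _ (hS.odot_mem hs he), fun j hj => ?_, fun j hj => ?_⟩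
    · rcases Finset.mem_insert.1 hj with rfl | hjT
      · rw [lukOplus_val, hya, lukOdot_val_of_right_eq_one _ hea, hsx, zero_add,
          min_eq_right (x j).le_one]
      · rw [hnew j (ne_of_mem_of_not_mem hjT haT), hyT j hjT]
    · rw [Finset.mem_insert, not_or] at hj
      rw [hnew j hj.1, hy0 j hj.2]

theorem eq_univ [Fintype ι] (hS : IsLukSubalgebra S) (hn : Function.Injective n)
    (hsurj : ∀ i (x : Luk (n i)), ∃ s ∈ S, s i = x) : S = Set.univ := by
  refine Set.eq_univ_of_forall fun x => ?_
  have hatom (i : ι) : ∃ e ∈ S, (e i).1 = 1 ∧ ∀ j, j ≠ i → (e j).1 = 0 := by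
    obtain ⟨e, he, hei, hej⟩ :=
      hS.exists_atom (fun j hji => hS.exists_eq_one_eq_zero hsurj hn hji.symm) Finset.univ
    exact ⟨e, he, hei, fun j => hej j (Finset.mem_univ j)⟩
  obtain ⟨y, hy, hyx, -⟩ := hS.exists_eq_on_eq_zero_off hsurj hatom x Finset.univ
  convert hy
  funext j
  exact Subtype.ext (hyx j (Finset.mem_univ j)).symm

end IsLukSubalgebra

theorem proper_subalg_embeds_general (l : ℕ) (n : Fin l → ℕ+)
    (hdist : ∀ i j : Fin l, i ≠ j → n i ≠ n j)
    (S : Set (∀ i, Luk (n i)))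
    (h0 : (fun i => lukZero (n i)) ∈ S)
    (hop : ∀ x ∈ S, ∀ y ∈ S, (fun i => lukOplus (x i) (y i)) ∈ S)
    (hneg : ∀ x ∈ S, (fun i => lukNeg (x i)) ∈ S)
    (hproper : S ≠ Set.univ) :
    ∃ d : Fin l → ℕ+, (∀ i, (d i : ℕ) ∣ (n i : ℕ)) ∧ (∃ j, d j ≠ n j) ∧
      ∃ f : S → ∀ i, Luk (d i), Function.Injective f ∧
        (∀ (x y : ∀ i, Luk (n i)) (hx : x ∈ S) (hy : y ∈ S),
          f ⟨fun i => lukOplus (x i) (y i), hop x hx y hy⟩ =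
            fun i => lukOplus (f ⟨x, hx⟩ i) (f ⟨y, hy⟩ i)) ∧
        (∀ (x : ∀ i, Luk (n i)) (hx : x ∈ S),
          f ⟨fun i => lukNeg (x i), hneg x hx⟩ = fun i => lukNeg (f ⟨x, hx⟩ i)) ∧
        (f ⟨fun i => lukZero (n i), h0⟩ = fun i => lukZero (d i)) := by
  have hS : IsLukSubalgebra S := ⟨h0, hop, hneg⟩
  have hn : Function.Injective n := fun i j hij => by_contra fun h => hdist i j h hij
  obtain ⟨i₀, hi₀⟩ : ∃ i, ¬ ∀ x : Luk (n i), ∃ s ∈ S, s i = x := by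
    by_contra! hsurj
    exact hproper (hS.eq_univ hn hsurj)
  choose d hdn hd using hS.exists_dvd_forall_mem_image_eval_iff
  refine ⟨d, hdn, ⟨i₀, fun h => hi₀ fun x => (hd i₀ x).2 (by rw [h]; exact x.2)⟩,
    fun s i => ⟨(s.1 i).1, (hd i _).1 ⟨s, s.2, rfl⟩⟩, fun s t hst => ?_,
    fun _ _ _ _ => rfl, fun _ _ => rfl, rfl⟩
  exact Subtype.ext (funext fun i => Subtype.ext (congrArg (fun y => (y i).1) hst))

/-- Every proper subalgebra of Ł_(n 0) × ⋯ × Ł_(n (l-1)) (with the n i pairwise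
distinct) embeds into some ∏ Ł_(d i) with d i ∣ n i for all i and d j ≠ n j for
some j. -/
theorem proper_subalg_embeds (l : ℕ) (hl : 1 ≤ l) (n : Fin l → ℕ+)
    (hdist : ∀ i j : Fin l, i ≠ j → n i ≠ n j)
    (S : Set (∀ i, Luk (n i)))
    (h0 : (fun i => lukZero (n i)) ∈ S)
    (hop : ∀ x ∈ S, ∀ y ∈ S, (fun i => lukOplus (x i) (y i)) ∈ S)
    (hneg : ∀ x ∈ S, (fun i => lukNeg (x i)) ∈ S)
    (hproper : S ≠ Set.univ) :
    ∃ d : Fin l → ℕ+, (∀ i, (d i : ℕ) ∣ (n i : ℕ)) ∧ (∃ j, d j ≠ n j) ∧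
      ∃ f : S → ∀ i, Luk (d i), Function.Injective f ∧
        (∀ (x y : ∀ i, Luk (n i)) (hx : x ∈ S) (hy : y ∈ S),
          f ⟨fun i => lukOplus (x i) (y i), hop x hx y hy⟩ =
            fun i => lukOplus (f ⟨x, hx⟩ i) (f ⟨y, hy⟩ i)) ∧
        (∀ (x : ∀ i, Luk (n i)) (hx : x ∈ S),
          f ⟨fun i => lukNeg (x i), hneg x hx⟩ = fun i => lukNeg (f ⟨x, hx⟩ i)) ∧
        (f ⟨fun i => lukZero (n i), h0⟩ = fun i => lukZero (d i)) :=
  proper_subalg_embeds_general l n hdist S h0 hop hneg hproper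
end

section
/- Let l ≥ 1, s ≥ 1, let n : Fin l → ℕ and m : Fin s → ℕ be positive. Then there exist N ≥ 1 and an injective homomorphism of MV-algebras from ∏_{i<l} Ł_{n_i} into (∏_{j<s} Ł_{m_j})^N if and only if both: (1) for every i < l there exists j < s with n_i ∣ m_j, and (2) for every j < s there exists i < l with n_i ∣ m_j. -/
/-! Every coordinate of an MV-embedding `∏ᵢ Ł_{nᵢ} → (∏ⱼ Ł_{mⱼ})^N` is a homomorphism
`φ : ∏ᵢ Ł_{nᵢ} → Ł_m`. Such a `φ` sends each Boolean element `eᵢ` (the top of the `i`-th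
factor) to `0` or `1`, and since the `eᵢ` join to `1`, some `eᵢ` goes to `1`. If `φ eᵢ = 1`,
the atom `uᵢ` (value `1/nᵢ` at `i`) satisfies `nᵢ uᵢ = eᵢ` and `¬uᵢ = ¬eᵢ ⊕ (nᵢ - 1) uᵢ`,
which forces `φ uᵢ = 1/nᵢ`, so `nᵢ ∣ m`. Injectivity sends each `eᵢ ≠ 0` to `1` in some
coordinate, and any single coordinate already has some `eᵢ ↦ 1`.

Conversely `Ł_a ⊆ Ł_b` when `a ∣ b`, and the coordinate `(r, j)` of the embedding reads off
`x_r` when `n_r ∣ m_j` and `x_{I j}` for a chosen `n_{I j} ∣ m_j` otherwise. -/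

namespace Luk

theorem val_nonneg {n : ℕ+} (x : Luk n) : 0 ≤ x.1 := by
  obtain ⟨k, -, hx⟩ := x.2
  rw [hx]
  positivity

theorem val_le_one {n : ℕ+} (x : Luk n) : x.1 ≤ 1 := by
  obtain ⟨k, hk, hx⟩ := x.2
  rw [hx, div_le_one (by exact_mod_cast n.pos)]
  exact_mod_cast hk

theorem val_eq_zero_or_one_of_oplus_self {n : ℕ+} {x : Luk n} (h : lukOplus x x = x) :
    x.1 = 0 ∨ x.1 = 1 := by
  have hv : min 1 (x.1 + x.1) = x.1 := congrArg Subtype.val h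
  rcases min_choice 1 (x.1 + x.1) with hm | hm <;> rw [hm] at hv
  · exact Or.inr hv.symm
  · exact Or.inl (by linarith)

theorem dvd_of_val_mul_eq_one {n : ℕ+} {x : Luk n} {k : ℕ} (h : x.1 * k = 1) :
    k ∣ (n : ℕ) := by
  obtain ⟨c, -, hx⟩ := x.2
  have hn : ((n : ℕ) : ℚ) ≠ 0 := by exact_mod_cast n.pos.ne'
  rw [hx, div_mul_eq_mul_div, div_eq_one_iff_eq hn] at h
  exact ⟨c, by rw [mul_comm]; exact_mod_cast h.symm⟩

def ofDvd {a b : ℕ+} (h : (a : ℕ) ∣ (b : ℕ)) (x : Luk a) : Luk b :=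
  ⟨x.1, by
    obtain ⟨k, hk, hx⟩ := x.2
    obtain ⟨c, hc⟩ := h
    have hc0 : (c : ℚ) ≠ 0 := by
      rintro hc0
      rw [Nat.cast_eq_zero.mp hc0, mul_zero] at hc
      exact b.pos.ne' hc
    refine ⟨k * c, by rw [hc]; exact Nat.mul_le_mul_right c hk, ?_⟩
    rw [hx, hc]
    push_cast
    rw [mul_div_mul_right _ _ hc0]⟩

end Luk

section ProductElements

variable {ι : Type*} [DecidableEq ι] (n : ι → ℕ+)

def lukIndicator (S : Finset ι) : ∀ i, Luk (n i) :=
  fun i => if i ∈ S then lukNeg (lukZero (n i)) else lukZero (n i)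

theorem lukIndicator_val (S : Finset ι) (i : ι) :
    (lukIndicator n S i).1 = if i ∈ S then 1 else 0 := by
  unfold lukIndicator
  split_ifs <;> simp [lukNeg, lukZero]

theorem lukIndicator_empty : lukIndicator n ∅ = fun i => lukZero (n i) := by
  funext i
  simp [lukIndicator]

theorem lukIndicator_univ [Fintype ι] :
    lukIndicator n Finset.univ = fun i => lukNeg (lukZero (n i)) := by
  funext i
  simp [lukIndicator]

theorem lukIndicator_union (S T : Finset ι) :
    lukIndicator n (S ∪ T) = fun i => lukOplus (lukIndicator n S i) (lukIndicator n T i) := by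
  funext i
  apply Subtype.ext
  change _ = min 1 (_ + _)
  simp only [lukIndicator_val, Finset.mem_union]
  split_ifs <;> simp_all

def lukSingle (i₀ : ι) (k : ℕ) (hk : k ≤ (n i₀ : ℕ)) : ∀ i, Luk (n i) :=
  fun i => if h : i = i₀ then ⟨k / (n i₀ : ℕ), by subst h; exact ⟨k, hk, rfl⟩⟩
    else lukZero (n i)

variable {n}

theorem lukSingle_val (i₀ : ι) (k : ℕ) (hk : k ≤ (n i₀ : ℕ)) (i : ι) :
    (lukSingle n i₀ k hk i).1 = if i = i₀ then (k : ℚ) / (n i₀ : ℕ) else 0 := by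
  unfold lukSingle
  split_ifs <;> rfl

theorem lukSingle_zero (i₀ : ι) (hk : 0 ≤ (n i₀ : ℕ)) :
    lukSingle n i₀ 0 hk = fun i => lukZero (n i) := by
  funext i
  apply Subtype.ext
  rw [lukSingle_val]
  split_ifs <;> simp [lukZero]

theorem lukSingle_succ (i₀ : ι) (k : ℕ) (hk : k + 1 ≤ (n i₀ : ℕ)) :
    lukSingle n i₀ (k + 1) hk = fun i =>
      lukOplus (lukSingle n i₀ k (by omega) i) (lukSingle n i₀ 1 (by omega) i) := by
  funext i
  apply Subtype.ext
  change _ = min 1 (_ + _)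
  simp only [lukSingle_val]
  split_ifs with h
  · rw [min_eq_right]
    · push_cast
      ring
    · subst h
      rw [← add_div, div_le_one (by exact_mod_cast (n i).pos)]
      exact_mod_cast hk
  · norm_num

theorem lukSingle_self (i₀ : ι) : lukSingle n i₀ (n i₀) le_rfl = lukIndicator n {i₀} := by
  funext i
  apply Subtype.ext
  simp only [lukSingle_val, lukIndicator_val, Finset.mem_singleton]
  split_ifs <;> simp

theorem neg_lukSingle_one (i₀ : ι) :
    (fun i => lukNeg (lukSingle n i₀ 1 (n i₀).pos i)) = fun i =>
      lukOplus (lukNeg (lukIndicator n {i₀} i)) (lukSingle n i₀ (n i₀ - 1) (Nat.sub_le _ _) i) := by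
  funext i
  apply Subtype.ext
  change 1 - _ = min 1 (1 - _ + _)
  simp only [lukSingle_val, lukIndicator_val, Finset.mem_singleton]
  have hn : ((n i₀ : ℕ) : ℚ) ≠ 0 := by exact_mod_cast (n i₀).pos.ne'
  split_ifs
  · rw [Nat.cast_sub (n i₀).pos, sub_self, zero_add, min_eq_right]
    · field_simp
    · rw [div_le_one (by positivity)]
      simp
  · norm_num

end ProductElements

structure IsLukHom {ι : Type*} (n : ι → ℕ+) (m : ℕ+) (φ : (∀ i, Luk (n i)) → Luk m) : Prop where
  map_oplus : ∀ x y, φ (fun i => lukOplus (x i) (y i)) = lukOplus (φ x) (φ y)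
  map_neg : ∀ x, φ (fun i => lukNeg (x i)) = lukNeg (φ x)
  map_zero : φ (fun i => lukZero (n i)) = lukZero m

namespace IsLukHom

variable {ι : Type*} [DecidableEq ι] {n : ι → ℕ+} {m : ℕ+} {φ : (∀ i, Luk (n i)) → Luk m}

theorem apply_lukIndicator_val_eq_zero_or_one (hφ : IsLukHom n m φ) (S : Finset ι) :
    (φ (lukIndicator n S)).1 = 0 ∨ (φ (lukIndicator n S)).1 = 1 := by
  refine Luk.val_eq_zero_or_one_of_oplus_self ?_
  rw [← hφ.map_oplus, ← lukIndicator_union, Finset.union_self]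

theorem exists_apply_lukIndicator_singleton_eq_one [Fintype ι] (hφ : IsLukHom n m φ) :
    ∃ i, (φ (lukIndicator n {i})).1 = 1 := by
  by_contra! hne
  have hzero : ∀ S : Finset ι, (φ (lukIndicator n S)).1 = 0 := by
    intro S
    induction S using Finset.induction_on with
    | empty => rw [lukIndicator_empty, hφ.map_zero]; rfl
    | insert a S _ ih =>
      rw [Finset.insert_eq, lukIndicator_union, hφ.map_oplus]
      change min 1 (_ + _) = (0 : ℚ)
      rw [ih, ((hφ.apply_lukIndicator_val_eq_zero_or_one {a}).resolve_right (hne a))]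
      norm_num
  have hone : (φ (lukIndicator n Finset.univ)).1 = 1 := by
    rw [lukIndicator_univ, hφ.map_neg, hφ.map_zero]
    change 1 - (0 : ℚ) = 1
    norm_num
  rw [hzero] at hone
  exact zero_ne_one hone

theorem val_apply_lukSingle (hφ : IsLukHom n m φ) (i₀ : ι) (k : ℕ) (hk : k ≤ (n i₀ : ℕ)) :
    (φ (lukSingle n i₀ k hk)).1 = min 1 (k * (φ (lukSingle n i₀ 1 (n i₀).pos)).1) := by
  induction k with
  | zero =>
    rw [lukSingle_zero, hφ.map_zero]
    simp [lukZero]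
  | succ k ih =>
    rw [lukSingle_succ, hφ.map_oplus]
    change min 1 (_ + _) = _
    rw [ih (by omega)]
    have ht := Luk.val_nonneg (φ (lukSingle n i₀ 1 (n i₀).pos))
    push_cast
    rcases le_total (k * (φ (lukSingle n i₀ 1 (n i₀).pos)).1) 1 with h | h
    · rw [min_eq_right h, add_mul, one_mul]
    · rw [min_eq_left h, min_eq_left (by linarith), min_eq_left (by nlinarith)]

theorem dvd_of_apply_lukIndicator_singleton (hφ : IsLukHom n m φ) (i₀ : ι) (h : (φ (lukIndicator n {i₀})).1 = 1) :
    (n i₀ : ℕ) ∣ (m : ℕ) := by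
  set t := (φ (lukSingle n i₀ 1 (n i₀).pos)).1 with ht
  have htop : min 1 ((n i₀ : ℕ) * t) = 1 := by
    rw [← hφ.val_apply_lukSingle _ _ le_rfl, lukSingle_self, h]
  have hneg : 1 - t = min 1 (((n i₀ : ℕ) - 1) * t) := by
    have := congrArg Subtype.val (congrArg φ (neg_lukSingle_one (n := n) i₀))
    rw [hφ.map_neg, hφ.map_oplus, hφ.map_neg] at this
    change 1 - t = min 1 (1 - _ + _) at this
    rw [this, h, hφ.val_apply_lukSingle, Nat.cast_sub (n i₀).pos, Nat.cast_one, sub_self,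
      zero_add, ← ht, inf_left_idem]
  refine Luk.dvd_of_val_mul_eq_one (x := φ (lukSingle n i₀ 1 (n i₀).pos)) ?_
  rw [← ht]
  rcases min_choice 1 (((n i₀ : ℕ) - 1) * t) with hm | hm <;> rw [hm] at hneg
  · rw [show t = 0 by linarith, mul_zero, min_eq_right zero_le_one] at htop
    exact absurd htop zero_ne_one
  · linarith

end IsLukHom

section Power

variable {ι R κ : Type*} {n : ι → ℕ+} {m : κ → ℕ+}

theorem isLukHom_apply_apply {f : (∀ i, Luk (n i)) → (R → ∀ j, Luk (m j))}
    (hoplus : ∀ x y, f (fun i => lukOplus (x i) (y i)) =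
      fun r j => lukOplus (f x r j) (f y r j))
    (hneg : ∀ x, f (fun i => lukNeg (x i)) = fun r j => lukNeg (f x r j))
    (hzero : f (fun i => lukZero (n i)) = fun _ j => lukZero (m j)) (r : R) (j : κ) :
    IsLukHom n (m j) (fun x => f x r j) where
  map_oplus x y := congrFun (congrFun (hoplus x y) r) j
  map_neg x := congrFun (congrFun (hneg x) r) j
  map_zero := congrFun (congrFun hzero r) j

def lukSelect {σ : R → κ → ι} (hσ : ∀ r j, (n (σ r j) : ℕ) ∣ (m j : ℕ))
    (x : ∀ i, Luk (n i)) : R → ∀ j, Luk (m j) :=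
  fun r j => Luk.ofDvd (hσ r j) (x (σ r j))

theorem lukSelect_injective {σ : R → κ → ι} (hσ : ∀ r j, (n (σ r j) : ℕ) ∣ (m j : ℕ))
    (hsurj : ∀ i, ∃ r j, σ r j = i) : Function.Injective (lukSelect hσ) := by
  intro x y hxy
  funext i
  obtain ⟨r, j, rfl⟩ := hsurj i
  have hval := congrArg Subtype.val (congrFun (congrFun hxy r) j)
  exact Subtype.ext hval

end Power

theorem embed_power_iff_general (l s : ℕ) (hl : 1 ≤ l)
    (n : Fin l → ℕ+) (m : Fin s → ℕ+) :
    (∃ (N : ℕ), 1 ≤ N ∧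
      ∃ f : (∀ i, Luk (n i)) → (Fin N → ∀ j, Luk (m j)),
        Function.Injective f ∧
        (∀ x y, f (fun i => lukOplus (x i) (y i)) =
          fun r j => lukOplus (f x r j) (f y r j)) ∧
        (∀ x, f (fun i => lukNeg (x i)) = fun r j => lukNeg (f x r j)) ∧
        (f (fun i => lukZero (n i)) = fun r j => lukZero (m j))) ↔
    ((∀ i : Fin l, ∃ j : Fin s, (n i : ℕ) ∣ (m j : ℕ)) ∧
      (∀ j : Fin s, ∃ i : Fin l, (n i : ℕ) ∣ (m j : ℕ))) := by
  constructor
  · rintro ⟨N, hN, f, hinj, hoplus, hneg, hzero⟩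
    have hφ := isLukHom_apply_apply hoplus hneg hzero
    refine ⟨fun i => ?_, fun j => ?_⟩
    · have hne : f (lukIndicator n {i}) ≠ f (fun i => lukZero (n i)) := fun h => by
        simpa [lukIndicator_val, lukZero] using congrArg Subtype.val (congrFun (hinj h) i)
      rw [hzero] at hne
      obtain ⟨r, j, hrj⟩ : ∃ r j, f (lukIndicator n {i}) r j ≠ lukZero (m j) := by
        by_contra! h
        exact hne (funext fun r => funext (h r))
      have hone := ((hφ r j).apply_lukIndicator_val_eq_zero_or_one {i}).resolve_left
        (fun h => hrj (Subtype.ext h))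
      exact ⟨j, (hφ r j).dvd_of_apply_lukIndicator_singleton i hone⟩
    · obtain ⟨i, hi⟩ := (hφ ⟨0, hN⟩ j).exists_apply_lukIndicator_singleton_eq_one
      exact ⟨i, (hφ ⟨0, hN⟩ j).dvd_of_apply_lukIndicator_singleton i hi⟩
  · rintro ⟨hsome, hall⟩
    choose J hJ using hsome
    choose I hI using hall
    let σ : Fin l → Fin s → Fin l := fun r j => if (n r : ℕ) ∣ (m j : ℕ) then r else I j
    have hσ : ∀ r j, (n (σ r j) : ℕ) ∣ (m j : ℕ) := fun r j => by
      by_cases h : (n r : ℕ) ∣ (m j : ℕ) <;> simp [σ, h, hI]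
    refine ⟨l, hl, lukSelect hσ, lukSelect_injective hσ fun i => ⟨i, J i, ?_⟩,
      fun _ _ => rfl, fun _ => rfl, rfl⟩
    simp [σ, hJ]

/-- ∏_i Ł_(n i) embeds into some finite power of ∏_j Ł_(m j) iff every n i divides
some m j and every m j is divided by some n i. -/
theorem embed_power_iff (l s : ℕ) (hl : 1 ≤ l) (hs : 1 ≤ s)
    (n : Fin l → ℕ+) (m : Fin s → ℕ+) :
    (∃ (N : ℕ), 1 ≤ N ∧
      ∃ f : (∀ i, Luk (n i)) → (Fin N → ∀ j, Luk (m j)),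
        Function.Injective f ∧
        (∀ x y, f (fun i => lukOplus (x i) (y i)) =
          fun r j => lukOplus (f x r j) (f y r j)) ∧
        (∀ x, f (fun i => lukNeg (x i)) = fun r j => lukNeg (f x r j)) ∧
        (f (fun i => lukZero (n i)) = fun r j => lukZero (m j))) ↔
    ((∀ i : Fin l, ∃ j : Fin s, (n i : ℕ) ∣ (m j : ℕ)) ∧
      (∀ j : Fin s, ∃ i : Fin l, (n i : ℕ) ∣ (m j : ℕ))) :=
  embed_power_iff_general l s hl n m
end
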